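/- arXiv:2407.00311 — 5 statements merged into one kernel-verified Lean document; each statement's English description precedes it below -/
import Mathlib

section
/- Let L ≥ 1 and M ≥ 1 be integers and let ζ₁, …, ζ_M be pairwise distinct complex numbers satisfying the simplified Bethe ansatz equations: for every j, L·ζ_j = 2·∑_{l≠j} (1 + ζ_l ζ_j)/(ζ_l − ζ_j). Then ∑_{j=1}^{M} ζ_j = 0. -/
open Finset

/-- Summing the simplified Bethe ansatz equations (SBAE)
`L ζ_j = 2 ∑_{l ≠ j} (1 + ζ_l ζ_j)/(ζ_l - ζ_j)` for pairwise distinct complex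
`ζ_1, …, ζ_M` gives `∑_j ζ_j = 0`. -/
theorem SBAE_sum_zero (L M : ℕ) (hL : 1 ≤ L) (hM : 1 ≤ M) (ζ : Fin M → ℂ)
    (hdist : Function.Injective ζ)
    (hSBAE : ∀ j : Fin M,
      (L : ℂ) * ζ j = 2 * ∑ l ∈ univ.erase j, (1 + ζ l * ζ j) / (ζ l - ζ j)) :
    ∑ j : Fin M, ζ j = 0 := by
  set f : Fin M → Fin M → ℂ := fun l j => (1 + ζ l * ζ j) / (ζ l - ζ j) with hf
  have hdiag : ∀ j, f j j = 0 := by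
    intro j; simp [hf]
  have hskew : ∀ l j, f l j = - f j l := by
    intro l j
    simp only [hf]
    rw [← div_neg, neg_sub]
    ring_nf
  have herase : ∀ j, ∑ l ∈ univ.erase j, f l j = ∑ l, f l j := by
    intro j
    rw [← Finset.sum_erase (f := fun l => f l j) univ (hdiag j)]
  have hT : (∑ j, ∑ l, f l j) = 0 := by
    have h1 : (∑ j, ∑ l, f l j) = ∑ l, ∑ j, f l j := Finset.sum_comm
    have h2 : (∑ l, ∑ j, f l j) = -∑ j, ∑ l, f l j := by
      rw [← Finset.sum_neg_distrib]
      refine Finset.sum_congr rfl fun l _ => ?_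
      rw [← Finset.sum_neg_distrib]
      exact Finset.sum_congr rfl fun j _ => hskew l j
    have := h1.trans h2
    linear_combination this / 2
  have hsum : (L : ℂ) * ∑ j, ζ j = 0 := by
    rw [Finset.mul_sum]
    calc ∑ j, (L : ℂ) * ζ j = ∑ j, 2 * ∑ l ∈ univ.erase j, f l j :=
          Finset.sum_congr rfl fun j _ => hSBAE j
      _ = 2 * ∑ j, ∑ l, f l j := by
          rw [← Finset.mul_sum]
          congr 1
          exact Finset.sum_congr rfl fun j _ => herase j
      _ = 0 := by rw [hT, mul_zero]
  have hL0 : (L : ℂ) ≠ 0 := Nat.cast_ne_zero.mpr (by omega)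
  exact (mul_eq_zero.mp hsum).resolve_left hL0
end

section
/- Let L ≥ 2 and M ≥ 1 be integers and let ζ₁, …, ζ_M be pairwise distinct complex numbers satisfying the simplified Bethe ansatz equations: for every j, L·ζ_j = 2·∑_{l≠j} (1 + ζ_l ζ_j)/(ζ_l − ζ_j). Then ∑_{j=1}^{M} ζ_j² = −M(M−1)/(L−1). -/
open Finset

private lemma sbae_swap {M : ℕ} (f : Fin M → Fin M → ℂ) :
    ∑ j : Fin M, ∑ l ∈ univ.erase j, f j l = ∑ j : Fin M, ∑ l ∈ univ.erase j, f l j := by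
  rw [Finset.sum_comm' (s' := fun l => univ.erase l) (t' := univ)]
  intro x y
  simp [eq_comm, ne_comm]

/-- For pairwise distinct complex solutions of the simplified Bethe ansatz equations
`L ζ_j = 2 ∑_{l ≠ j} (1 + ζ_l ζ_j)/(ζ_l - ζ_j)` with `L ≥ 2`, `M ≥ 1`, one has
`∑_j ζ_j² = -M(M-1)/(L-1)`. -/
theorem SBAE_sum_sq (L M : ℕ) (hL : 2 ≤ L) (hM : 1 ≤ M) (ζ : Fin M → ℂ)
    (hdist : Function.Injective ζ)
    (hSBAE : ∀ j : Fin M,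
      (L : ℂ) * ζ j = 2 * ∑ l ∈ univ.erase j, (1 + ζ l * ζ j) / (ζ l - ζ j)) :
    ∑ j : Fin M, (ζ j) ^ 2 = -((M : ℂ) * ((M : ℂ) - 1)) / ((L : ℂ) - 1) := by
  have hne : ∀ j l : Fin M, l ≠ j → ζ l - ζ j ≠ 0 := by
    intro j l h
    exact sub_ne_zero.mpr (fun e => h (hdist e))
  set P := ∑ j : Fin M, ζ j with hP
  set S := ∑ j : Fin M, (ζ j) ^ 2 with hS
  have hLpos : (L : ℂ) ≠ 0 := Nat.cast_ne_zero.mpr (by omega)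
  -- Step 1: the plain double sum vanishes by antisymmetry
  have hT0 : ∑ j : Fin M, ∑ l ∈ univ.erase j, (1 + ζ l * ζ j) / (ζ l - ζ j) = 0 := by
    have h2 : (2 : ℂ) * (∑ j : Fin M, ∑ l ∈ univ.erase j, (1 + ζ l * ζ j) / (ζ l - ζ j)) = 0 := by
      calc (2 : ℂ) * (∑ j : Fin M, ∑ l ∈ univ.erase j, (1 + ζ l * ζ j) / (ζ l - ζ j))
          = (∑ j : Fin M, ∑ l ∈ univ.erase j, (1 + ζ l * ζ j) / (ζ l - ζ j))
            + ∑ j : Fin M, ∑ l ∈ univ.erase j, (1 + ζ j * ζ l) / (ζ j - ζ l) := by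
            rw [sbae_swap (fun j l => (1 + ζ l * ζ j) / (ζ l - ζ j))]; ring
        _ = ∑ j : Fin M, ∑ l ∈ univ.erase j,
              ((1 + ζ l * ζ j) / (ζ l - ζ j) + (1 + ζ j * ζ l) / (ζ j - ζ l)) := by
            rw [← Finset.sum_add_distrib]
            exact Finset.sum_congr rfl fun j _ => (Finset.sum_add_distrib).symm
        _ = 0 := by
            apply Finset.sum_eq_zero; intro j _
            apply Finset.sum_eq_zero; intro l hl
            have h1 : ζ l - ζ j ≠ 0 := hne j l (Finset.ne_of_mem_erase hl)
            have h2 : ζ j - ζ l ≠ 0 := fun h => h1 (by linear_combination -h)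
            field_simp
            ring
    simpa using (mul_eq_zero.mp h2)
  have hPzero : P = 0 := by
    have hz : (L : ℂ) * P = 0 := by
      rw [hP, Finset.mul_sum]
      calc ∑ j : Fin M, (L : ℂ) * ζ j
          = ∑ j : Fin M, 2 * ∑ l ∈ univ.erase j, (1 + ζ l * ζ j) / (ζ l - ζ j) :=
            Finset.sum_congr rfl fun j _ => hSBAE j
        _ = 2 * ∑ j : Fin M, ∑ l ∈ univ.erase j, (1 + ζ l * ζ j) / (ζ l - ζ j) := by
            rw [Finset.mul_sum]
        _ = 0 := by rw [hT0, mul_zero]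
    exact (mul_eq_zero.mp hz).resolve_left hLpos
  -- Step 2: multiply by ζ j and sum
  have hmul : ∀ j : Fin M, (L : ℂ) * (ζ j) ^ 2
      = 2 * ∑ l ∈ univ.erase j, ζ j * ((1 + ζ l * ζ j) / (ζ l - ζ j)) := by
    intro j
    calc (L : ℂ) * (ζ j) ^ 2 = ((L : ℂ) * ζ j) * ζ j := by ring
      _ = (2 * ∑ l ∈ univ.erase j, (1 + ζ l * ζ j) / (ζ l - ζ j)) * ζ j := by rw [hSBAE j]
      _ = 2 * ∑ l ∈ univ.erase j, ζ j * ((1 + ζ l * ζ j) / (ζ l - ζ j)) := by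
          rw [mul_assoc, Finset.sum_mul]
          congr 1
          exact Finset.sum_congr rfl fun l _ => by ring
  have key : 2 * ((L : ℂ) * S)
      = ∑ j : Fin M, ∑ l ∈ univ.erase j, (-(2 : ℂ) * (1 + ζ j * ζ l)) := by
    have e1 : (L : ℂ) * S
        = 2 * ∑ j : Fin M, ∑ l ∈ univ.erase j, ζ j * ((1 + ζ l * ζ j) / (ζ l - ζ j)) := by
      rw [hS, Finset.mul_sum, Finset.mul_sum]
      exact Finset.sum_congr rfl fun j _ => by rw [hmul j, Finset.mul_sum]
    calc 2 * ((L : ℂ) * S)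
        = 2 * (∑ j : Fin M, ∑ l ∈ univ.erase j, ζ j * ((1 + ζ l * ζ j) / (ζ l - ζ j))
          + ∑ j : Fin M, ∑ l ∈ univ.erase j, ζ l * ((1 + ζ j * ζ l) / (ζ j - ζ l))) := by
          rw [e1, ← sbae_swap (fun j l => ζ j * ((1 + ζ l * ζ j) / (ζ l - ζ j)))]; ring
      _ = 2 * ∑ j : Fin M, ∑ l ∈ univ.erase j,
            (ζ j * ((1 + ζ l * ζ j) / (ζ l - ζ j)) + ζ l * ((1 + ζ j * ζ l) / (ζ j - ζ l))) := by
          rw [← Finset.sum_add_distrib]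
          congr 1
          exact Finset.sum_congr rfl fun j _ => (Finset.sum_add_distrib).symm
      _ = ∑ j : Fin M, ∑ l ∈ univ.erase j, (-(2 : ℂ) * (1 + ζ j * ζ l)) := by
          rw [Finset.mul_sum]
          refine Finset.sum_congr rfl fun j _ => ?_
          rw [Finset.mul_sum]
          refine Finset.sum_congr rfl fun l hl => ?_
          have h1 : ζ l - ζ j ≠ 0 := hne j l (Finset.ne_of_mem_erase hl)
          have h2 : ζ j - ζ l ≠ 0 := fun h => h1 (by linear_combination -h)
          field_simp
          ring
  -- compute the RHS sum
  have hrhs : ∑ j : Fin M, ∑ l ∈ univ.erase j, (-(2 : ℂ) * (1 + ζ j * ζ l))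
      = -2 * ((M : ℂ) * ((M : ℂ) - 1) + P * P - S) := by
    have inner : ∀ j : Fin M, ∑ l ∈ univ.erase j, (-(2 : ℂ) * (1 + ζ j * ζ l))
        = -2 * (((M : ℂ) - 1) + ζ j * (P - ζ j)) := by
      intro j
      have hcard : ((univ.erase j).card : ℂ) = (M : ℂ) - 1 := by
        rw [Finset.card_erase_of_mem (Finset.mem_univ j), Finset.card_univ, Fintype.card_fin]
        push_cast [Nat.cast_sub hM]
        ring
      have hsub : ∑ l ∈ univ.erase j, ζ l = P - ζ j := by
        rw [hP, ← Finset.sum_erase_add univ ζ (Finset.mem_univ j)]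
        ring
      calc ∑ l ∈ univ.erase j, (-(2 : ℂ) * (1 + ζ j * ζ l))
          = ∑ l ∈ univ.erase j, ((-2 : ℂ) + (-2 * ζ j) * ζ l) :=
            Finset.sum_congr rfl fun l _ => by ring
        _ = ((univ.erase j).card : ℂ) * (-2) + (-2 * ζ j) * ∑ l ∈ univ.erase j, ζ l := by
            rw [Finset.sum_add_distrib, Finset.sum_const, nsmul_eq_mul, ← Finset.mul_sum]
        _ = -2 * (((M : ℂ) - 1) + ζ j * (P - ζ j)) := by rw [hcard, hsub]; ring
    calc ∑ j : Fin M, ∑ l ∈ univ.erase j, (-(2 : ℂ) * (1 + ζ j * ζ l))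
        = ∑ j : Fin M, ((-2 * ((M : ℂ) - 1)) + (-2 * P) * ζ j + 2 * (ζ j) ^ 2) := by
          refine Finset.sum_congr rfl fun j _ => ?_
          rw [inner j]; ring
      _ = -2 * ((M : ℂ) * ((M : ℂ) - 1) + P * P - S) := by
          simp only [Finset.sum_add_distrib, Finset.sum_const, Finset.card_univ,
            Fintype.card_fin, nsmul_eq_mul, ← Finset.mul_sum]
          rw [← hP, ← hS]
          ring
  have hfin : 2 * ((L : ℂ) * S) = -2 * ((M : ℂ) * ((M : ℂ) - 1) - S) := by
    rw [key, hrhs, hPzero]; ring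
  have hL1 : (L : ℂ) - 1 ≠ 0 := by
    intro h
    have h1 : (L : ℂ) = 1 := by linear_combination h
    have : L = 1 := by exact_mod_cast h1
    omega
  field_simp
  linear_combination hfin/2
end

section
/- Let L ≥ 2 and M ≥ 1 be integers and let ζ₁, …, ζ_M be pairwise distinct complex numbers satisfying the simplified Bethe ansatz equations: for every j, L·ζ_j = 2·∑_{l≠j} (1 + ζ_l ζ_j)/(ζ_l − ζ_j). Then ∑_{j=1}^{M} (1 + ζ_j²) = M(L−M)/(L−1); consequently, for any real J and complex δ, the M-magnon energy E = E₀ + Jδ·∑_{j=1}^{M}(1 + ζ_j²) equals E₀ + Jδ·M(L−M)/(L−1). -/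
open Finset

/-- For pairwise distinct complex solutions of the simplified Bethe ansatz equations
`L ζ_j = 2 ∑_{l ≠ j} (1 + ζ_l ζ_j)/(ζ_l - ζ_j)` with `L ≥ 2`, `M ≥ 1`, one has
`∑_j (1 + ζ_j²) = M(L-M)/(L-1)`; consequently the `M`-magnon energy
`E = E₀ + J δ ∑_j (1 + ζ_j²)` equals `E₀ + J δ M(L-M)/(L-1)`. -/
theorem SBAE_energy (L M : ℕ) (hL : 2 ≤ L) (hM : 1 ≤ M) (ζ : Fin M → ℂ)
    (hdist : Function.Injective ζ)
    (hSBAE : ∀ j : Fin M,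
      (L : ℂ) * ζ j = 2 * ∑ l ∈ univ.erase j, (1 + ζ l * ζ j) / (ζ l - ζ j)) :
    (∑ j : Fin M, (1 + (ζ j) ^ 2) = (M : ℂ) * ((L : ℂ) - (M : ℂ)) / ((L : ℂ) - 1)) ∧
    (∀ (J : ℝ) (δ E₀ : ℂ),
      E₀ + (J : ℂ) * δ * ∑ j : Fin M, (1 + (ζ j) ^ 2)
        = E₀ + (J : ℂ) * δ * ((M : ℂ) * ((L : ℂ) - (M : ℂ)) / ((L : ℂ) - 1))) := by
  have hsub : ∀ j l : Fin M, l ≠ j → ζ l - ζ j ≠ 0 := fun j l h =>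
    sub_ne_zero.mpr (fun e => h (hdist e))
  -- swapping the two indices in a double sum over distinct pairs
  have swap : ∀ f : Fin M → Fin M → ℂ,
      (∑ j : Fin M, ∑ l ∈ univ.erase j, f j l)
        = ∑ j : Fin M, ∑ l ∈ univ.erase j, f l j := by
    intro f
    exact Finset.sum_comm' (by intro x y; simp [mem_erase]; tauto)
  have key : ∀ f : Fin M → Fin M → ℂ,
      2 * (∑ j : Fin M, ∑ l ∈ univ.erase j, f j l)
        = ∑ j : Fin M, ∑ l ∈ univ.erase j, (f j l + f l j) := by
    intro f
    rw [two_mul]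
    nth_rewrite 2 [swap f]
    rw [← Finset.sum_add_distrib]
    exact Finset.sum_congr rfl fun j _ => (Finset.sum_add_distrib).symm
  set S1 := ∑ j : Fin M, ζ j with hS1def
  set S2 := ∑ j : Fin M, (ζ j) ^ 2 with hS2def
  have hLne : ((L : ℂ)) ≠ 0 := by
    exact_mod_cast Nat.cast_ne_zero.mpr (by omega)
  have hL1ne : ((L : ℂ) - 1) ≠ 0 := by
    intro h
    have h1 : (L : ℂ) = 1 := by linear_combination h
    have : L = 1 := by exact_mod_cast h1
    omega
  -- Step 1 : S1 = 0
  have hS1 : S1 = 0 := by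
    have e1 : (L : ℂ) * S1
        = ∑ j : Fin M, ∑ l ∈ univ.erase j,
            ((1 + ζ l * ζ j) / (ζ l - ζ j) + (1 + ζ j * ζ l) / (ζ j - ζ l)) := by
      rw [hS1def, Finset.mul_sum]
      calc ∑ j : Fin M, (L : ℂ) * ζ j
          = ∑ j : Fin M, 2 * ∑ l ∈ univ.erase j, (1 + ζ l * ζ j) / (ζ l - ζ j) :=
            Finset.sum_congr rfl fun j _ => hSBAE j
        _ = 2 * ∑ j : Fin M, ∑ l ∈ univ.erase j, (1 + ζ l * ζ j) / (ζ l - ζ j) :=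
            (Finset.mul_sum _ _ _).symm
        _ = _ := key _
    have e2 : (L : ℂ) * S1 = 0 := by
      rw [e1]
      refine Finset.sum_eq_zero fun j _ => Finset.sum_eq_zero fun l hl => ?_
      have hlj : l ≠ j := (Finset.mem_erase.mp hl).1
      have h1 := hsub j l hlj
      have h2 := hsub l j (Ne.symm hlj)
      field_simp
      ring
    exact (mul_eq_zero.mp e2).resolve_left hLne
  -- Step 2 : (L - 1) * S2 = -(M * (M - 1))
  have hcard : ∀ j : Fin M, ((univ.erase j).card : ℂ) = (M : ℂ) - 1 := by
    intro j
    rw [Finset.card_erase_of_mem (mem_univ j), Finset.card_univ, Fintype.card_fin,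
      Nat.cast_sub hM, Nat.cast_one]
  have hsumerase : ∀ j : Fin M, ∑ l ∈ univ.erase j, ζ l = S1 - ζ j := by
    intro j
    rw [hS1def, Finset.sum_erase_eq_sub (mem_univ j)]
  have hS2 : ((L : ℂ) - 1) * S2 = -((M : ℂ) * ((M : ℂ) - 1)) := by
    have e1 : (L : ℂ) * S2
        = ∑ j : Fin M, ∑ l ∈ univ.erase j,
            (ζ j * ((1 + ζ l * ζ j) / (ζ l - ζ j)) + ζ l * ((1 + ζ j * ζ l) / (ζ j - ζ l))) := by
      rw [hS2def, Finset.mul_sum]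
      calc ∑ j : Fin M, (L : ℂ) * (ζ j) ^ 2
          = ∑ j : Fin M, ζ j * ((L : ℂ) * ζ j) := by
            refine Finset.sum_congr rfl fun j _ => by ring
        _ = ∑ j : Fin M, 2 * ∑ l ∈ univ.erase j, ζ j * ((1 + ζ l * ζ j) / (ζ l - ζ j)) := by
            refine Finset.sum_congr rfl fun j _ => ?_
            rw [hSBAE j, mul_left_comm, Finset.mul_sum]
        _ = 2 * ∑ j : Fin M, ∑ l ∈ univ.erase j, ζ j * ((1 + ζ l * ζ j) / (ζ l - ζ j)) :=
            (Finset.mul_sum _ _ _).symm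
        _ = _ := key _
    have e2 : (L : ℂ) * S2 = ∑ j : Fin M, ∑ l ∈ univ.erase j, (-(1 + ζ j * ζ l)) := by
      rw [e1]
      refine Finset.sum_congr rfl fun j _ => Finset.sum_congr rfl fun l hl => ?_
      have hlj : l ≠ j := (Finset.mem_erase.mp hl).1
      have h1 := hsub j l hlj
      have h2 := hsub l j (Ne.symm hlj)
      field_simp
      ring
    have e3 : (L : ℂ) * S2 = -((M : ℂ) * ((M : ℂ) - 1)) + S2 := by
      rw [e2]
      have : ∀ j : Fin M, ∑ l ∈ univ.erase j, (-(1 + ζ j * ζ l))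
          = -(((M : ℂ) - 1) + ζ j * (S1 - ζ j)) := by
        intro j
        rw [Finset.sum_neg_distrib]
        congr 1
        rw [Finset.sum_add_distrib, Finset.sum_const, ← hsumerase j, Finset.mul_sum,
          nsmul_eq_mul, hcard j, mul_one]
      rw [Finset.sum_congr rfl fun j _ => this j]
      rw [Finset.sum_neg_distrib, Finset.sum_add_distrib, Finset.sum_const,
        Finset.card_univ, Fintype.card_fin, nsmul_eq_mul]
      have : ∑ j : Fin M, ζ j * (S1 - ζ j) = S1 * S1 - S2 := by
        rw [hS2def, hS1def]
        rw [Finset.sum_congr rfl (fun j _ => by ring :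
          ∀ j ∈ univ, ζ j * (S1 - ζ j) = S1 * ζ j - ζ j ^ 2)]
        rw [Finset.sum_sub_distrib, ← Finset.mul_sum, ← hS1def]
      rw [this, hS1]
      ring
    linear_combination e3
  -- conclusion
  have main : ∑ j : Fin M, (1 + (ζ j) ^ 2) = (M : ℂ) * ((L : ℂ) - (M : ℂ)) / ((L : ℂ) - 1) := by
    have : ∑ j : Fin M, (1 + (ζ j) ^ 2) = (M : ℂ) + S2 := by
      rw [Finset.sum_add_distrib, Finset.sum_const, Finset.card_univ, Fintype.card_fin,
        nsmul_eq_mul, mul_one, ← hS2def]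
    rw [this]
    field_simp
    linear_combination hS2
  exact ⟨main, fun J δ E₀ => by rw [main]⟩
end

section
/- Let L and m be positive integers and let a₁, …, a_m be pairwise distinct nonzero complex numbers such that L·a_j = 2·∑_{l≠j} a_j a_l/(a_l − a_j) for every j = 1, …, m. Then L = m − 1. In particular, no such family exists when m ≤ L. -/
open Finset

/-- No divergent solutions of the SBAE: if `a_1, …, a_m` are pairwise distinct nonzero
complex numbers with `L a_j = 2 ∑_{l ≠ j} a_j a_l/(a_l - a_j)` for all `j`, then
`L = m - 1`; in particular no such family exists when `m ≤ L`. -/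
theorem SBAE_no_divergent_solutions (L m : ℕ) (hL : 0 < L) (hm : 0 < m)
    (a : Fin m → ℂ) (hdist : Function.Injective a) (hne : ∀ j, a j ≠ 0)
    (heq : ∀ j : Fin m,
      (L : ℂ) * a j = 2 * ∑ l ∈ univ.erase j, a j * a l / (a l - a j)) :
    L = m - 1 ∧ ¬ m ≤ L := by
  have hsub : ∀ j l : Fin m, j ≠ l → a l - a j ≠ 0 := by
    intro j l h hz
    exact h (hdist (sub_eq_zero.mp hz)).symm
  -- divide each equation by a j
  have h1 : ∀ j : Fin m, (L : ℂ) = ∑ l ∈ univ.erase j, 2 * a l / (a l - a j) := by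
    intro j
    have := heq j
    have h2 : a j * (L : ℂ) = a j * ∑ l ∈ univ.erase j, 2 * a l / (a l - a j) := by
      rw [Finset.mul_sum]
      rw [mul_comm (a j) ((L:ℂ))]
      rw [this, Finset.mul_sum]
      congr 1
      ext l
      ring
    exact mul_left_cancel₀ (hne j) h2
  set g : Fin m → Fin m → ℂ := fun j l => 2 * a l / (a l - a j) with hg
  have hsum : (m : ℂ) * L = ∑ j : Fin m, ∑ l ∈ univ.erase j, g j l := by
    rw [Finset.sum_congr rfl (fun j _ => (h1 j).symm)]
    simp [mul_comm]
  have hswap : (∑ j : Fin m, ∑ l ∈ univ.erase j, g j l)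
      = ∑ j : Fin m, ∑ l ∈ univ.erase j, g l j := by
    rw [Finset.sum_comm' (s' := fun l => univ.erase l) (t' := univ)]
    intro x y
    simp [eq_comm, ne_comm]
  have hpair : ∀ j l : Fin m, j ≠ l → g j l + g l j = 2 := by
    intro j l h
    have h1 := hsub j l h
    have h2 := hsub l j (Ne.symm h)
    rw [hg]
    field_simp
    ring
  have htot : (2 : ℂ) * ((m : ℂ) * L) = 2 * (m * (m - 1)) := by
    calc (2 : ℂ) * ((m : ℂ) * L)
        = ∑ j : Fin m, ∑ l ∈ univ.erase j, (g j l + g l j) := by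
          have hsplit : ∑ j : Fin m, ∑ l ∈ univ.erase j, (g j l + g l j)
              = (∑ j : Fin m, ∑ l ∈ univ.erase j, g j l)
                + ∑ j : Fin m, ∑ l ∈ univ.erase j, g l j := by
            rw [← Finset.sum_add_distrib]
            exact Finset.sum_congr rfl fun j _ => Finset.sum_add_distrib
          rw [hsplit, ← hswap, ← hsum]; ring
      _ = ∑ j : Fin m, ∑ l ∈ univ.erase j, (2 : ℂ) := by
          apply Finset.sum_congr rfl; intro j _
          apply Finset.sum_congr rfl; intro l hl
          exact hpair j l (Ne.symm (Finset.ne_of_mem_erase hl))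
      _ = 2 * (m * (m - 1)) := by
          simp [Finset.card_erase_of_mem, Finset.card_univ]
          rw [Nat.cast_sub hm]
          push_cast
          ring
  have hLm : (L : ℂ) = (m : ℂ) - 1 := by
    have hm0 : (m : ℂ) ≠ 0 := Nat.cast_ne_zero.mpr hm.ne'
    field_simp at htot
    linear_combination htot
  have hL' : L = m - 1 := by
    have : ((L : ℂ) : ℂ) = ((m - 1 : ℕ) : ℂ) := by
      rw [hLm, Nat.cast_sub hm]; norm_num
    exact_mod_cast this
  refine ⟨hL', ?_⟩
  omega
end

section
/- Fix an integer L ≥ 2 and a real J > 0. For every ε > 0 there exists β₀ > 0 such that for all real β ≥ β₀ and every Δ ∈ ℂ satisfying ∑_{M=0}^{L} exp(−βJ(Δ−1)·M(L−M)/(L−1)) = 0, one has |Re Δ − 1| < ε. That is, in the zero-temperature limit β → ∞ the Yang-Lee zeros of the XXZ chain approach the vertical line Re Δ = 1 through the ferromagnetic transition point Δ = 1. -/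
open Finset

lemma exp_le_aux (L M : ℕ) (hM : M ≤ L) : M * (L - M) ≤ L / 2 * (L - L / 2) := by
  set d := L / 2 with hd
  have h1 : 2 * d ≤ L := by omega
  have h2 : L ≤ 2 * d + 1 := by omega
  have hdL : d ≤ L := by omega
  zify [hM, hdL]
  rcases le_or_gt M d with h | h
  · nlinarith [mul_nonneg (by push_cast; linarith : (0:ℤ) ≤ (d:ℤ) - M) (by push_cast; omega : (0:ℤ) ≤ (L:ℤ) - d - M)]
  · have h3 : (L:ℤ) - d ≤ M := by push_cast; omega
    nlinarith [mul_nonneg (by push_cast; linarith : (0:ℤ) ≤ (M:ℤ) - d) (by linarith : (0:ℤ) ≤ (M:ℤ) - ((L:ℤ) - d))]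

lemma sum_ne_zero_of_small (L : ℕ) (hL : 2 ≤ L) (w : ℂ)
    (hw : ‖w‖ ≤ 1 / (2 * L)) :
    ∑ M ∈ Finset.range (L + 1), w ^ (M * (L - M)) ≠ 0 := by
  have hL0 : (0:ℝ) < L := by positivity
  have hw1 : ‖w‖ ≤ 1 := by
    refine le_trans hw ?_
    rw [div_le_one (by positivity)]
    have : (2:ℝ) ≤ L := by exact_mod_cast hL
    linarith
  have hsplit : ∑ M ∈ Finset.range (L + 1), w ^ (M * (L - M))
      = (2 : ℂ) + ∑ i ∈ Finset.range (L - 1), w ^ ((i+1) * (L - (i+1))) := by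
    rw [Finset.sum_range_succ]
    have hL' : L = (L - 1) + 1 := by omega
    rw [hL', Finset.sum_range_succ']
    simp only [Nat.zero_mul, pow_zero, Nat.sub_self, Nat.mul_zero]
    rw [← hL']
    ring
  intro h
  rw [hsplit] at h
  have hT : ‖∑ i ∈ Finset.range (L - 1), w ^ ((i+1) * (L - (i+1)))‖ ≤ ((L:ℝ) - 1) * (1 / (2*L)) := by
    calc ‖∑ i ∈ Finset.range (L - 1), w ^ ((i+1) * (L - (i+1)))‖
        ≤ ∑ i ∈ Finset.range (L - 1), ‖w ^ ((i+1) * (L - (i+1)))‖ :=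
          norm_sum_le _ _
      _ ≤ ∑ _i ∈ Finset.range (L - 1), (1 / (2*(L:ℝ))) := by
          apply Finset.sum_le_sum
          intro i hi
          rw [Finset.mem_range] at hi
          rw [norm_pow]
          calc ‖w‖ ^ ((i+1) * (L - (i+1)))
              ≤ ‖w‖ ^ 1 := by
                apply pow_le_pow_of_le_one (norm_nonneg w) hw1
                have h1 : 1 ≤ L - (i+1) := by omega
                calc 1 = 1 * 1 := (one_mul 1).symm
                  _ ≤ (i+1) * (L - (i+1)) := Nat.mul_le_mul (by omega) h1
            _ = ‖w‖ := pow_one _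
            _ ≤ 1 / (2*L) := hw
      _ = ((L:ℝ) - 1) * (1 / (2*L)) := by
          rw [Finset.sum_const, Finset.card_range, nsmul_eq_mul]
          congr 1
          rw [Nat.cast_sub (by omega : 1 ≤ L), Nat.cast_one]
  have hTval : (∑ i ∈ Finset.range (L - 1), w ^ ((i+1) * (L - (i+1)))) = -2 := by
    linear_combination h
  rw [hTval] at hT
  simp only [norm_neg, Complex.norm_two] at hT
  have : ((L:ℝ) - 1) * (1 / (2*L)) < 1 := by
    rw [mul_one_div, div_lt_one (by positivity)]; linarith
  linarith

lemma sum_ne_zero_of_big (L : ℕ) (hL : 2 ≤ L) (w : ℂ)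
    (hw : (L + 2 : ℝ) ≤ ‖w‖) :
    ∑ M ∈ Finset.range (L + 1), w ^ (M * (L - M)) ≠ 0 := by
  set K := L / 2 * (L - L / 2) with hK
  have hK1 : 1 ≤ K := by
    have h1 : 1 ≤ L / 2 := by omega
    have h2 : 1 ≤ L - L / 2 := by omega
    calc 1 = 1 * 1 := (one_mul 1).symm
      _ ≤ K := Nat.mul_le_mul h1 h2
  have hw1 : (1:ℝ) ≤ ‖w‖ := by
    have : (0:ℝ) ≤ L := by positivity
    linarith
  have hwpos : (0:ℝ) < ‖w‖ := by linarith
  set A := (Finset.range (L + 1)).filter (fun M => M * (L - M) = K) with hA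
  set B := (Finset.range (L + 1)).filter (fun M => ¬ (M * (L - M) = K)) with hB
  have hsplit : ∑ M ∈ Finset.range (L + 1), w ^ (M * (L - M))
      = (A.card : ℂ) * w ^ K + ∑ M ∈ B, w ^ (M * (L - M)) := by
    rw [← Finset.sum_filter_add_sum_filter_not (Finset.range (L+1)) (fun M => M * (L - M) = K)]
    congr 1
    rw [Finset.sum_congr rfl (fun M hM => by rw [(Finset.mem_filter.mp hM).2]),
      Finset.sum_const, nsmul_eq_mul]
  have hcard : 1 ≤ A.card := by
    apply Finset.card_pos.mpr
    exact ⟨L / 2, Finset.mem_filter.mpr ⟨Finset.mem_range.mpr (by omega), rfl⟩⟩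
  intro h
  rw [hsplit] at h
  have hT : ‖∑ M ∈ B, w ^ (M * (L - M))‖
      ≤ ((L:ℝ) + 1) * ‖w‖ ^ (K - 1) := by
    calc ‖∑ M ∈ B, w ^ (M * (L - M))‖
        ≤ ∑ M ∈ B, ‖w ^ (M * (L - M))‖ := norm_sum_le _ _
      _ ≤ ∑ _M ∈ B, ‖w‖ ^ (K - 1) := by
          apply Finset.sum_le_sum
          intro M hM
          rw [hB, Finset.mem_filter, Finset.mem_range] at hM
          rw [norm_pow]
          apply pow_le_pow_right₀ hw1
          have := exp_le_aux L M (by omega)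
          omega
      _ ≤ ((L:ℝ) + 1) * ‖w‖ ^ (K - 1) := by
          rw [Finset.sum_const, nsmul_eq_mul]
          apply mul_le_mul_of_nonneg_right _ (by positivity)
          calc ((B.card : ℕ) : ℝ)
              ≤ (((Finset.range (L+1)).card : ℕ) : ℝ) := by
                exact_mod_cast Finset.card_le_card (Finset.filter_subset _ _)
            _ = (L:ℝ) + 1 := by rw [Finset.card_range]; push_cast; ring
  have habs : ((L:ℝ) + 2) * ‖w‖ ^ (K - 1) ≤ ‖(A.card : ℂ) * w ^ K‖ := by
    rw [norm_mul, norm_pow, Complex.norm_natCast]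
    have h1 : (1:ℝ) ≤ (A.card : ℝ) := by exact_mod_cast hcard
    have hKsplit : ‖w‖ ^ K = ‖w‖ * ‖w‖ ^ (K - 1) := by
      rw [← pow_succ']
      congr 1
      omega
    rw [hKsplit]
    calc ((L:ℝ) + 2) * ‖w‖ ^ (K-1)
        ≤ ‖w‖ * ‖w‖ ^ (K-1) :=
          mul_le_mul_of_nonneg_right hw (by positivity)
      _ = 1 * (‖w‖ * ‖w‖ ^ (K-1)) := (one_mul _).symm
      _ ≤ (A.card : ℝ) * (‖w‖ * ‖w‖ ^ (K-1)) :=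
          mul_le_mul_of_nonneg_right h1 (by positivity)
  have hval : (A.card : ℂ) * w ^ K = -(∑ M ∈ B, w ^ (M * (L - M))) := by
    linear_combination h
  rw [hval, norm_neg] at habs
  have hlt : ((L:ℝ) + 1) * ‖w‖ ^ (K - 1) < ((L:ℝ) + 2) * ‖w‖ ^ (K - 1) :=
    mul_lt_mul_of_pos_right (by linarith) (by positivity)
  linarith

/-- In the zero-temperature limit the Yang-Lee zeros of the XXZ chain approach the line
`Re Δ = 1`: for `L ≥ 2` and `J > 0`, for every `ε > 0` there is `β₀ > 0` such that for all
`β ≥ β₀` every complex `Δ` with `∑_{M=0}^L exp(-β J (Δ-1) M(L-M)/(L-1)) = 0` satisfies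
`|Re Δ - 1| < ε`. -/
theorem yang_lee_zeros_approach_line (L : ℕ) (hL : 2 ≤ L) (J : ℝ) (hJ : 0 < J) :
    ∀ ε > 0, ∃ β₀ > 0, ∀ β : ℝ, β₀ ≤ β → ∀ Δ : ℂ,
      (∑ M ∈ Finset.range (L + 1),
          Complex.exp (-(β : ℂ) * (J : ℂ) * (Δ - 1) * ((M * (L - M) : ℕ) : ℂ) / ((L : ℂ) - 1))
        = 0) →
      |Δ.re - 1| < ε := by
  intro ε hε
  have hL2 : (2:ℝ) ≤ L := by exact_mod_cast hL
  have hlog : 0 < Real.log (2 * L) := Real.log_pos (by linarith)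
  have hβ₀pos : 0 < ((L:ℝ) - 1) * Real.log (2 * L) / (J * ε) := by
    apply div_pos (mul_pos (by linarith) hlog) (mul_pos hJ hε)
  refine ⟨((L:ℝ) - 1) * Real.log (2 * L) / (J * ε), hβ₀pos, ?_⟩
  intro β hβ Δ h
  have hL1 : (0:ℝ) < (L:ℝ) - 1 := by linarith
  have hβ0 : 0 < β := lt_of_lt_of_le hβ₀pos hβ
  set a : ℂ := -(β : ℂ) * (J : ℂ) * (Δ - 1) / ((L : ℂ) - 1) with ha
  have hterm : ∀ M : ℕ,
      Complex.exp (-(β : ℂ) * (J : ℂ) * (Δ - 1) * ((M * (L - M) : ℕ) : ℂ) / ((L : ℂ) - 1))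
      = Complex.exp a ^ (M * (L - M)) := by
    intro M
    rw [← Complex.exp_nat_mul]
    congr 1
    rw [ha]
    ring
  rw [Finset.sum_congr rfl (fun M _ => hterm M)] at h
  have hne : ((L:ℂ) - 1) ≠ 0 := by
    intro hc
    have h2 : (((L:ℝ) - 1 : ℝ) : ℂ) = 0 := by push_cast; exact hc
    rw [Complex.ofReal_eq_zero] at h2
    linarith
  have hare : a.re = -(β * J / ((L:ℝ) - 1)) * (Δ.re - 1) := by
    have hcalc : a = ((-(β * J / ((L:ℝ) - 1)) : ℝ) : ℂ) * (Δ - 1) := by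
      rw [ha]
      have hneR : ((L:ℝ) - 1) ≠ 0 := by linarith
      push_cast
      field_simp
    rw [hcalc, Complex.re_ofReal_mul]
    simp
  set r : ℝ := β * J / ((L:ℝ) - 1) with hr
  have hrpos : 0 < r := by positivity
  have habsw : ‖Complex.exp a‖ = Real.exp a.re := Complex.norm_exp a
  have hlow : 1 / (2 * (L:ℝ)) < ‖Complex.exp a‖ := by
    by_contra hc
    push_neg at hc
    exact sum_ne_zero_of_small L hL _ hc h
  have hhigh : ‖Complex.exp a‖ < (L:ℝ) + 2 := by
    by_contra hc
    push_neg at hc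
    exact sum_ne_zero_of_big L hL _ hc h
  have h1 : -Real.log (2 * L) < a.re := by
    rw [habsw] at hlow
    have := Real.log_lt_log (by positivity) hlow
    rwa [Real.log_exp, one_div, Real.log_inv] at this
  have h2 : a.re < Real.log (2 * L) := by
    rw [habsw] at hhigh
    have hlt := Real.log_lt_log (Real.exp_pos _) hhigh
    rw [Real.log_exp] at hlt
    calc a.re < Real.log ((L:ℝ) + 2) := hlt
      _ ≤ Real.log (2 * L) := Real.log_le_log (by positivity) (by linarith)
  have hare_abs : |a.re| < Real.log (2 * L) := abs_lt.mpr ⟨h1, h2⟩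
  have hre : |Δ.re - 1| = |a.re| / r := by
    rw [hare, abs_mul, abs_neg, abs_of_pos hrpos]
    field_simp
  rw [hre, div_lt_iff₀ hrpos]
  have hkey : ((L:ℝ) - 1) * Real.log (2 * L) ≤ β * (J * ε) := by
    rw [div_le_iff₀ (mul_pos hJ hε)] at hβ
    linarith [hβ]
  calc |a.re| < Real.log (2 * L) := hare_abs
    _ ≤ ε * r := by
        rw [hr, mul_div_assoc', le_div_iff₀ hL1]
        calc Real.log (2 * L) * ((L:ℝ) - 1) = ((L:ℝ) - 1) * Real.log (2 * L) := by ring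
          _ ≤ β * (J * ε) := hkey
          _ = ε * (β * J) := by ring
end
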